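/- arXiv:2411.13062 — 2 statements merged into one kernel-verified Lean document; each statement's English description precedes it below -/
import Mathlib

section
/- Let n ≥ 1, p ∈ ℕ, and Q = (q_{ij}) an n×n symmetric real matrix. Then Σ_{i ∈ [n]^p} Σ_{π ∈ P_2(p), π ≤ ker(i)} ∏_{(U,V) ∈ E(f_π)} q_{i_U, i_V} = Σ_{π ∈ P_2(p)} Σ_{j : blocks(π) → [n]} ∏_{(U,V) ∈ E(f_π)} q_{j(U), j(V)}, and when Q has entries in [−1,1] the right-hand side equals n^{p/2} Σ_{π ∈ P_2(p)} ρ(f_π, w_Q), where w_Q is the step graphon of Q. (This is the exact moment identity τ(S_n^p) = Σ_{π ∈ P_2(p)} ρ(f_π, w_{Q_n}) for a mixed q-Gaussian system.) -/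
open MeasureTheory Filter Topology
open scoped Classical

namespace EpsCLT

/-- Two subsets of `Fin p` (typically blocks of a partition) *cross* if there exist
`i < k < j < l` with `i, j` in one of them and `k, l` in the other. -/
def Crosses {p : ℕ} (B₁ B₂ : Finset (Fin p)) : Prop :=
  ∃ i k j l : Fin p, i < k ∧ k < j ∧ j < l ∧
    ((i ∈ B₁ ∧ j ∈ B₁ ∧ k ∈ B₂ ∧ l ∈ B₂) ∨ (i ∈ B₂ ∧ j ∈ B₂ ∧ k ∈ B₁ ∧ l ∈ B₁))

theorem Crosses.symm {p : ℕ} {B₁ B₂ : Finset (Fin p)} (h : Crosses B₁ B₂) : Crosses B₂ B₁ := by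
  obtain ⟨i, k, j, l, h1, h2, h3, h4⟩ := h
  exact ⟨i, k, j, l, h1, h2, h3, h4.symm⟩

/-- `P` is a pair partition of `Fin p`: every block has two elements and every point lies in
exactly one block. -/
def IsPairPartition {p : ℕ} (P : Finset (Finset (Fin p))) : Prop :=
  (∀ B ∈ P, B.card = 2) ∧ ∀ i : Fin p, ∃! B, B ∈ P ∧ i ∈ B

/-- `P` is a partition of `Fin p`: blocks are nonempty and every point lies in exactly one. -/
def IsPartition {p : ℕ} (P : Finset (Finset (Fin p))) : Prop :=
  (∀ B ∈ P, B.Nonempty) ∧ ∀ i : Fin p, ∃! B, B ∈ P ∧ i ∈ B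

/-- A partition is noncrossing if no two (distinct) blocks cross. -/
def IsNoncrossing {p : ℕ} (P : Finset (Finset (Fin p))) : Prop :=
  ∀ B₁ ∈ P, ∀ B₂ ∈ P, B₁ ≠ B₂ → ¬ Crosses B₁ B₂

/-- The intersection graph `f_π` of a partition: vertices are the blocks, with an edge between
two blocks iff they cross. -/
def interGraph {p : ℕ} (P : Finset (Finset (Fin p))) : SimpleGraph {B // B ∈ P} where
  Adj B₁ B₂ := B₁ ≠ B₂ ∧ Crosses B₁.1 B₂.1
  symm := ⟨fun _ _ h => ⟨Ne.symm h.1, h.2.symm⟩⟩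
  loopless := ⟨fun _ h => h.1 rfl⟩

/-- Product over the edges of a graph (each edge counted once) of a symmetric function of the
endpoints.  The function is symmetrized, so for symmetric `F` each factor is `F u v`. -/
noncomputable def edgeProd {V : Type*} [Fintype V] (f : SimpleGraph V) (F : V → V → ℝ) : ℝ :=
  ∏ e ∈ f.edgeFinset, Sym2.lift ⟨fun u v => (F u v + F v u) / 2, fun u v => by ring⟩ e

/-- Homomorphism density `ρ(f, w)` of a finite simple graph in a graphon `w`. -/
noncomputable def density {V : Type*} [Fintype V] (f : SimpleGraph V) (w : ℝ → ℝ → ℝ) : ℝ :=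
  ∫ x in Set.univ.pi (fun _ : V => Set.Icc (0:ℝ) 1), edgeProd f (fun u v => w (x u) (x v))

/-- The step function of an `n × n` matrix: on the box `[(i-1)/n, i/n) × [(j-1)/n, j/n)`
(0-indexed: `[i/n, (i+1)/n) × [j/n, (j+1)/n)`) it takes the value `Q i j`. -/
noncomputable def stepFn {n : ℕ} (Q : Fin n → Fin n → ℝ) (x y : ℝ) : ℝ :=
  if hx : (⌊x * n⌋).toNat < n ∧ (⌊y * n⌋).toNat < n ∧ 0 ≤ x ∧ 0 ≤ y then
    Q ⟨(⌊x * n⌋).toNat, hx.1⟩ ⟨(⌊y * n⌋).toNat, hx.2.1⟩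
  else 0

/-- The step graphon `w_g` of a finite simple graph on `[n]`. -/
noncomputable def stepGraphon {n : ℕ} (g : SimpleGraph (Fin n)) : ℝ → ℝ → ℝ :=
  stepFn (fun i j => if g.Adj i j then 1 else 0)

/-- The finset of all pair partitions of `Fin p`. -/
noncomputable def pairPartitions (p : ℕ) : Finset (Finset (Finset (Fin p))) :=
  Finset.univ.filter IsPairPartition

/-- `Σ_{π ∈ P₂(p)} ρ(f_π, w)`, the `p`-th moment of the limit law `μ_w`. -/
noncomputable def momentFormula (p : ℕ) (w : ℝ → ℝ → ℝ) : ℝ :=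
  ∑ P ∈ pairPartitions p, density (interGraph P) w

/-- `g`-independence (ε-independence) of a family of unital subalgebras with respect to a state
`τ`, following Młotkowski and Speicher–Wysoczański. -/
def GIndep {A : Type*} [Ring A] [Algebra ℂ A] (τ : A →ₗ[ℂ] ℂ) {ι : Type*}
    (g : SimpleGraph ι) (B : ι → Subalgebra ℂ A) : Prop :=
  (∀ i j : ι, g.Adj i j →
      ∀ a ∈ B i, ∀ b ∈ B j, a * b = b * a ∧ τ (a * b) = τ a * τ b) ∧
  (∀ (k : ℕ) (idx : Fin k → ι),
      (∀ j₁ j₂ : Fin k, j₁ < j₂ → idx j₁ = idx j₂ →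
        ∃ j₃, j₁ < j₃ ∧ j₃ < j₂ ∧ ¬ g.Adj (idx j₁) (idx j₃)) →
      ∀ a : Fin k → A, (∀ j, a j ∈ B (idx j)) → (∀ j, τ (a j) = 0) →
        τ (List.ofFn a).prod = 0)

/-- The finset of graph homomorphisms from `f` to `g`. -/
noncomputable def homFinset {V W : Type*} [Fintype V] [Fintype W] (f : SimpleGraph V)
    (g : SimpleGraph W) : Finset (V → W) :=
  Finset.univ.filter fun φ => ∀ u v, f.Adj u v → g.Adj (φ u) (φ v)

/-- The finset of injective graph homomorphisms from `f` to `g`. -/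
noncomputable def injHomFinset {V W : Type*} [Fintype V] [Fintype W] (f : SimpleGraph V)
    (g : SimpleGraph W) : Finset (V → W) :=
  Finset.univ.filter fun φ => Function.Injective φ ∧ ∀ u v, f.Adj u v → g.Adj (φ u) (φ v)

/-- The number of graph homomorphisms `hom(f, g)`. -/
noncomputable def homCount {V W : Type*} [Fintype V] [Fintype W] (f : SimpleGraph V)
    (g : SimpleGraph W) : ℕ := (homFinset f g).card

/-- Weighted homomorphism density `ρ(f, (g, α))` of `f` in a node-weighted graph `(g, α)`. -/
noncomputable def wHomDensity {V W : Type*} [Fintype V] [Fintype W] (f : SimpleGraph V)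
    (g : SimpleGraph W) (α : W → ℝ) : ℝ :=
  (∑ φ ∈ homFinset f g, ∏ v : V, α (φ v)) / (∑ v : W, α v) ^ (Fintype.card V)

/-- Weighted injective homomorphism density `ρ_inj(f, (g, α))`. -/
noncomputable def wInjHomDensity {V W : Type*} [Fintype V] [Fintype W] (f : SimpleGraph V)
    (g : SimpleGraph W) (α : W → ℝ) : ℝ :=
  (∑ φ ∈ injHomFinset f g, ∏ v : V, α (φ v)) / (∑ v : W, α v) ^ (Fintype.card V)

/-!
A tuple `i ∈ [n]^p` with `π ≤ ker i` is the same thing as a labelling of the blocks of `π`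
(read off at the least element of each block), so after exchanging the two sums the first
identity holds term by term. For the second, `w_Q` is constant on each box
`∏_U [j_U/n, (j_U+1)/n)`; these boxes, one for each labelling `j`, tile `[0,1)^{blocks π}`, which
is the unit cube up to a null set, and each has volume `n^{-|blocks π|} = n^{-p/2}`.
-/

section Partitions

variable {p : ℕ} {P : Finset (Finset (Fin p))}

lemma mem_pairPartitions : P ∈ pairPartitions p ↔ IsPairPartition P := by
  simp [pairPartitions]

lemma IsPairPartition.isPartition (hP : IsPairPartition P) : IsPartition P :=
  ⟨fun B hB => Finset.card_pos.1 (by rw [hP.1 B hB]; norm_num), hP.2⟩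

lemma IsPartition.sum_card (hP : IsPartition P) : ∑ B ∈ P, B.card = p := by
  have hcover : P.biUnion id = Finset.univ :=
    Finset.eq_univ_of_forall fun i => Finset.mem_biUnion.2 (hP.2 i).exists
  have hdisj : (P : Set (Finset (Fin p))).PairwiseDisjoint id := fun B₁ h₁ B₂ h₂ hne =>
    Finset.disjoint_left.2 fun i hi₁ hi₂ => hne ((hP.2 i).unique ⟨h₁, hi₁⟩ ⟨h₂, hi₂⟩)
  simpa [hcover] using (Finset.card_biUnion hdisj).symm

lemma IsPairPartition.two_mul_card (hP : IsPairPartition P) : 2 * P.card = p := by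
  calc 2 * P.card = ∑ B ∈ P, B.card := by
        rw [Finset.sum_congr rfl hP.1, Finset.sum_const, smul_eq_mul, mul_comm]
    _ = p := hP.isPartition.sum_card

namespace IsPartition

noncomputable def blockOf (hP : IsPartition P) (i : Fin p) : {B // B ∈ P} :=
  ⟨(hP.2 i).exists.choose, (hP.2 i).exists.choose_spec.1⟩

lemma mem_blockOf (hP : IsPartition P) (i : Fin p) : i ∈ (hP.blockOf i).1 :=
  (hP.2 i).exists.choose_spec.2

lemma blockOf_eq (hP : IsPartition P) {i : Fin p} {B : Finset (Fin p)} (hB : B ∈ P)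
    (hi : i ∈ B) : hP.blockOf i = ⟨B, hB⟩ :=
  Subtype.ext ((hP.2 i).unique ⟨(hP.blockOf i).2, hP.mem_blockOf i⟩ ⟨hB, hi⟩)

lemma sum_blockConstant_eq_sum {α M : Type*} [Fintype α] [DecidableEq α] [AddCommMonoid M]
    (hP : IsPartition P) (g : ({B // B ∈ P} → α) → M) :
    ∑ idx ∈ Finset.univ.filter
        (fun idx : Fin p → α => ∀ B ∈ P, ∀ u ∈ B, ∀ v ∈ B, idx u = idx v),
      g (fun U => idx (U.1.min' (hP.1 U U.2))) = ∑ j, g j := by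
  refine Finset.sum_nbij' (fun idx U => idx (U.1.min' (hP.1 U U.2)))
    (fun j i => j (hP.blockOf i)) (fun _ _ => Finset.mem_univ _) ?_ ?_ ?_ (fun _ _ => rfl)
  · intro j _
    simp only [Finset.mem_filter_univ]
    intro B hB u hu v hv
    rw [hP.blockOf_eq hB hu, hP.blockOf_eq hB hv]
  · intro idx hidx
    simp only [Finset.mem_filter_univ] at hidx
    funext i
    exact hidx _ (hP.blockOf i).2 _ (Finset.min'_mem _ _) i (hP.mem_blockOf i)
  · intro j _
    funext U
    exact congrArg j (hP.blockOf_eq U.2 (Finset.min'_mem _ _))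

lemma sum_edgeProd_blockConstant {α : Type*} [Fintype α] [DecidableEq α] (hP : IsPartition P)
    (Q : α → α → ℝ) (f : SimpleGraph {B // B ∈ P}) :
    ∑ idx ∈ Finset.univ.filter
        (fun idx : Fin p → α => ∀ B ∈ P, ∀ u ∈ B, ∀ v ∈ B, idx u = idx v),
      edgeProd f (fun U V =>
        if h : U.1.Nonempty ∧ V.1.Nonempty then
          Q (idx (U.1.min' h.1)) (idx (V.1.min' h.2)) else 1)
    = ∑ j : {B // B ∈ P} → α, edgeProd f (fun U V => Q (j U) (j V)) := by
  refine (Finset.sum_congr rfl fun idx _ => ?_).trans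
    (hP.sum_blockConstant_eq_sum fun j => edgeProd f fun U V => Q (j U) (j V))
  congr 1
  funext U V
  exact dif_pos ⟨hP.1 U.1 U.2, hP.1 V.1 V.2⟩

end IsPartition

end Partitions

section StepGraphon

variable {n : ℕ}

def stepCell (n i : ℕ) : Set ℝ := Set.Ico ((i : ℝ) / n) ((i + 1) / n)

lemma mem_stepCell_iff (hn : 0 < n) {i : ℕ} {x : ℝ} : x ∈ stepCell n i ↔ ⌊x * n⌋ = i := by
  have hnR : (0 : ℝ) < n := by exact_mod_cast hn
  rw [stepCell, Set.mem_Ico, div_le_iff₀ hnR, lt_div_iff₀ hnR, Int.floor_eq_iff]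
  push_cast
  rfl

lemma stepFn_of_mem_stepCell (hn : 0 < n) (Q : Fin n → Fin n → ℝ) {i j : Fin n} {x y : ℝ}
    (hx : x ∈ stepCell n i) (hy : y ∈ stepCell n j) : stepFn Q x y = Q i j := by
  have hx0 : 0 ≤ x := le_trans (by positivity) hx.1
  have hy0 : 0 ≤ y := le_trans (by positivity) hy.1
  have hfx : (⌊x * n⌋).toNat = i := by rw [(mem_stepCell_iff hn).1 hx, Int.toNat_natCast]
  have hfy : (⌊y * n⌋).toNat = j := by rw [(mem_stepCell_iff hn).1 hy, Int.toNat_natCast]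
  rw [stepFn, dif_pos ⟨hfx ▸ i.2, hfy ▸ j.2, hx0, hy0⟩]
  congr 1 <;> exact Fin.ext ‹_›

lemma pairwise_disjoint_stepCell (hn : 0 < n) : Pairwise (Function.onFun Disjoint (stepCell n)) :=
  fun i j hij => Set.disjoint_left.2 fun x hi hj => hij <| by
    exact_mod_cast ((mem_stepCell_iff hn).1 hi).symm.trans ((mem_stepCell_iff hn).1 hj)

lemma iUnion_stepCell (hn : 0 < n) : ⋃ i : Fin n, stepCell n i = Set.Ico 0 1 := by
  have hnR : (0 : ℝ) < n := by exact_mod_cast hn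
  ext x
  simp only [Set.mem_iUnion, mem_stepCell_iff hn, Set.mem_Ico]
  constructor
  · rintro ⟨i, hi⟩
    rw [Int.floor_eq_iff] at hi
    push_cast at hi
    have hi' : (i : ℝ) + 1 ≤ n := by exact_mod_cast i.2
    constructor <;> nlinarith [hi.1, hi.2]
  · rintro ⟨h0, h1⟩
    have hlt : ⌊x * n⌋ < n := Int.floor_lt.2 (by push_cast; nlinarith)
    have hnonneg : 0 ≤ ⌊x * n⌋ := Int.floor_nonneg.2 (by positivity)
    exact ⟨⟨(⌊x * n⌋).toNat, by omega⟩, by simp [hnonneg]⟩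

lemma volume_stepCell (hn : 0 < n) (i : ℕ) :
    volume (stepCell n i) = ENNReal.ofReal (n : ℝ)⁻¹ := by
  rw [stepCell, Real.volume_Ico]
  congr 1
  field_simp
  ring

lemma density_stepFn (hn : 0 < n) (Q : Fin n → Fin n → ℝ) {V : Type*} [Fintype V]
    [DecidableEq V] (f : SimpleGraph V) :
    density f (stepFn Q) =
      (n : ℝ)⁻¹ ^ Fintype.card V * ∑ j : V → Fin n, edgeProd f (fun u v => Q (j u) (j v)) := by
  set box : (V → Fin n) → Set (V → ℝ) := fun j => Set.univ.pi fun v => stepCell n (j v)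
  have hmeas (j) : MeasurableSet (box j) := MeasurableSet.univ_pi fun _ => measurableSet_Ico
  have hdisj : Pairwise (Function.onFun Disjoint box) := fun j₁ j₂ hne => by
    obtain ⟨v, hv⟩ := Function.ne_iff.1 hne
    exact Set.disjoint_univ_pi.2 ⟨v, pairwise_disjoint_stepCell hn (Fin.val_injective.ne hv)⟩
  have hcover : ⋃ j, box j = Set.univ.pi fun _ : V => Set.Ico (0 : ℝ) 1 := by
    simp only [box, Set.iUnion_univ_pi (fun _ (i : Fin n) => stepCell n i), iUnion_stepCell hn]
  have hvol (j) : volume (box j) = ENNReal.ofReal (n : ℝ)⁻¹ ^ Fintype.card V := by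
    simp [box, volume_pi_pi, volume_stepCell hn]
  have hconst (j) : ∀ x ∈ box j, edgeProd f (fun u v => stepFn Q (x u) (x v)) =
      edgeProd f (fun u v => Q (j u) (j v)) := fun x hx => by
    simp only [stepFn_of_mem_stepCell hn Q (hx _ (Set.mem_univ _)) (hx _ (Set.mem_univ _))]
  have hint (j) : IntegrableOn (fun x => edgeProd f (fun u v => stepFn Q (x u) (x v))) (box j) :=
    (integrableOn_const (by simp [hvol])).congr_fun (fun x hx => (hconst j x hx).symm)
      (hmeas j)
  calc density f (stepFn Q)
      = ∫ x in ⋃ j, box j, edgeProd f (fun u v => stepFn Q (x u) (x v)) := by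
        rw [density, hcover]
        exact setIntegral_congr_set Measure.pi_Ico_ae_eq_pi_Icc.symm
    _ = ∑ j, ∫ x in box j, edgeProd f (fun u v => stepFn Q (x u) (x v)) :=
        integral_iUnion_fintype hmeas hdisj hint
    _ = ∑ j, (n : ℝ)⁻¹ ^ Fintype.card V * edgeProd f (fun u v => Q (j u) (j v)) :=
        Finset.sum_congr rfl fun j _ => by
          rw [setIntegral_congr_fun (hmeas j) (hconst j), setIntegral_const, measureReal_def,
            hvol, smul_eq_mul, ENNReal.toReal_pow, ENNReal.toReal_ofReal (by positivity)]
    _ = _ := (Finset.mul_sum _ _ _).symm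

lemma edgeProd_of_isEmpty {V : Type*} [Fintype V] [IsEmpty V] (f : SimpleGraph V)
    (F : V → V → ℝ) : edgeProd f F = 1 := by
  rw [edgeProd, Finset.eq_empty_of_isEmpty f.edgeFinset, Finset.prod_empty]

lemma density_of_isEmpty {V : Type*} [Fintype V] [IsEmpty V] (f : SimpleGraph V)
    (w : ℝ → ℝ → ℝ) : density f w = 1 := by
  simp [density, edgeProd_of_isEmpty, measureReal_def, Real.volume_Icc_pi]

lemma sum_edgeProd_eq_pow_mul_density (Q : Fin n → Fin n → ℝ) {V : Type*} [Fintype V]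
    [DecidableEq V] (f : SimpleGraph V) :
    ∑ j : V → Fin n, edgeProd f (fun u v => Q (j u) (j v)) =
      (n : ℝ) ^ Fintype.card V * density f (stepFn Q) := by
  rcases n.eq_zero_or_pos with rfl | hn
  · cases isEmpty_or_nonempty V
    · simp [density_of_isEmpty, edgeProd_of_isEmpty]
    · simp
  · rw [density_stepFn hn, ← mul_assoc, ← mul_pow, mul_inv_cancel₀ (by positivity), one_pow,
      one_mul]

end StepGraphon

theorem mixed_qGaussian_moment_identity_general
    (n p : ℕ) (Q : Fin n → Fin n → ℝ) :
    ((∑ idx : Fin p → Fin n,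
        ∑ P ∈ (pairPartitions p).filter (fun P => ∀ B ∈ P, ∀ u ∈ B, ∀ v ∈ B, idx u = idx v),
          edgeProd (interGraph P) (fun U V =>
            if h : U.1.Nonempty ∧ V.1.Nonempty then
              Q (idx (U.1.min' h.1)) (idx (V.1.min' h.2)) else 1))
      = ∑ P ∈ pairPartitions p, ∑ j : {B // B ∈ P} → Fin n,
          edgeProd (interGraph P) (fun U V => Q (j U) (j V))) ∧
    ((∀ i j, Q i j ∈ Set.Icc (-1:ℝ) 1) →
      (∑ P ∈ pairPartitions p, ∑ j : {B // B ∈ P} → Fin n,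
          edgeProd (interGraph P) (fun U V => Q (j U) (j V)))
        = Real.sqrt n ^ p * momentFormula p (stepFn Q)) := by
  refine ⟨?_, fun _ => ?_⟩
  · rw [Finset.sum_comm' (t' := pairPartitions p) (s' := fun P => Finset.univ.filter
      fun idx : Fin p → Fin n => ∀ B ∈ P, ∀ u ∈ B, ∀ v ∈ B, idx u = idx v) (by simp [and_comm])]
    refine Finset.sum_congr rfl fun P hPp => ?_
    exact (mem_pairPartitions.1 hPp).isPartition.sum_edgeProd_blockConstant Q _
  · rw [momentFormula, Finset.mul_sum]
    refine Finset.sum_congr rfl fun P hP => ?_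
    refine (sum_edgeProd_eq_pow_mul_density Q _).trans ?_
    rw [Fintype.card_coe]
    nth_rewrite 1 [← Real.sq_sqrt n.cast_nonneg]
    rw [← pow_mul, (mem_pairPartitions.1 hP).two_mul_card]

/-- Exact moment identity for a mixed `q`-Gaussian system:
`Σ_{i ∈ [n]^p} Σ_{π ∈ P₂(p), π ≤ ker i} ∏_{(U,V) ∈ E(f_π)} q_{i_U, i_V}` equals the sum over pair
partitions `π` and maps `j : blocks(π) → [n]` of `∏_{(U,V) ∈ E(f_π)} q_{j(U), j(V)}`, and for
`Q` with entries in `[-1,1]` the latter equals `n^{p/2} Σ_{π ∈ P₂(p)} ρ(f_π, w_Q)`. -/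
theorem mixed_qGaussian_moment_identity
    (n p : ℕ) (Q : Fin n → Fin n → ℝ) (hQsymm : ∀ i j, Q i j = Q j i) :
    ((∑ idx : Fin p → Fin n,
        ∑ P ∈ (pairPartitions p).filter (fun P => ∀ B ∈ P, ∀ u ∈ B, ∀ v ∈ B, idx u = idx v),
          edgeProd (interGraph P) (fun U V =>
            if h : U.1.Nonempty ∧ V.1.Nonempty then
              Q (idx (U.1.min' h.1)) (idx (V.1.min' h.2)) else 1))
      = ∑ P ∈ pairPartitions p, ∑ j : {B // B ∈ P} → Fin n,
          edgeProd (interGraph P) (fun U V => Q (j U) (j V))) ∧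
    ((∀ i j, Q i j ∈ Set.Icc (-1:ℝ) 1) →
      (∑ P ∈ pairPartitions p, ∑ j : {B // B ∈ P} → Fin n,
          edgeProd (interGraph P) (fun U V => Q (j U) (j V)))
        = Real.sqrt n ^ p * momentFormula p (stepFn Q)) :=
  mixed_qGaussian_moment_identity_general n p Q

end EpsCLT
end

section
/- Let f be a finite simple graph with k vertices and g a finite simple graph on vertex set [n] with n ≥ 1, and let w_g be the step graphon of g. Then ∫_{[0,1]^{V(f)}} ∏_{{u,v} ∈ E(f)} w_g(x_u, x_v) dx = hom(f, g)/n^k, i.e. ρ(f, w_g) = ρ(f, g). -/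
open MeasureTheory Filter Topology
open scoped Classical

namespace EpsCLT

/-!
Up to a null set, the cube `[0,1]^V` is the disjoint union of the `n^k` boxes
`∏_v [φ(v)/n, (φ(v)+1)/n)`, one for each map `φ : V → [n]`, each of volume `n^{-k}`. On the box
of `φ` the step graphon takes the value `A_g(φ u, φ v)` at `(x_u, x_v)`, so the integrand is the
constant `1` if `φ` is a homomorphism and `0` otherwise.
-/

open Set

section StepCells

variable {n : ℕ}

def cell (n i : ℕ) : Set ℝ := Ico ((i : ℝ) / n) (((i : ℝ) + 1) / n)

def stepBox {V : Type*} (n : ℕ) (φ : V → Fin n) : Set (V → ℝ) :=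
  univ.pi fun v => cell n (φ v)

lemma mem_cell_iff (hn : 0 < n) {i : ℕ} {x : ℝ} : x ∈ cell n i ↔ 0 ≤ x ∧ ⌊x * n⌋₊ = i := by
  have hn' : (0 : ℝ) < n := by exact_mod_cast hn
  rw [cell, mem_Ico, div_le_iff₀ hn', lt_div_iff₀ hn']
  constructor
  · rintro ⟨hi, hi'⟩
    have hx : 0 ≤ x := nonneg_of_mul_nonneg_left (i.cast_nonneg.trans hi) hn'
    exact ⟨hx, (Nat.floor_eq_iff (by positivity)).2 ⟨hi, hi'⟩⟩
  · rintro ⟨hx, rfl⟩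
    exact (Nat.floor_eq_iff (by positivity)).1 rfl

lemma iUnion_cell (hn : 0 < n) : ⋃ i : Fin n, cell n i = Ico 0 1 := by
  have hn' : (0 : ℝ) < n := by exact_mod_cast hn
  ext x
  simp only [mem_iUnion, mem_cell_iff hn, mem_Ico]
  constructor
  · rintro ⟨i, hx, hi⟩
    refine ⟨hx, (mul_lt_iff_lt_one_left hn').1 ?_⟩
    rw [← Nat.floor_lt (by positivity), hi]
    exact i.isLt
  · rintro ⟨hx, hx1⟩
    have : ⌊x * n⌋₊ < n := (Nat.floor_lt (by positivity)).2 (by nlinarith)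
    exact ⟨⟨_, this⟩, hx, rfl⟩

lemma stepFn_of_mem_cell (hn : 0 < n) (Q : Fin n → Fin n → ℝ) {x y : ℝ} {i j : Fin n}
    (hx : x ∈ cell n i) (hy : y ∈ cell n j) : stepFn Q x y = Q i j := by
  obtain ⟨hx0, hxi⟩ := (mem_cell_iff hn).1 hx
  obtain ⟨hy0, hyj⟩ := (mem_cell_iff hn).1 hy
  simp only [stepFn, Int.floor_toNat, hxi, hyj, i.isLt, j.isLt, hx0, hy0, and_self, dite_true]

lemma iUnion_stepBox (hn : 0 < n) (V : Type*) :
    ⋃ φ : V → Fin n, stepBox n φ = univ.pi fun _ : V => Ico (0 : ℝ) 1 :=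
  (iUnion_univ_pi fun (_ : V) (i : Fin n) => cell n i).trans (by simp only [iUnion_cell hn])

lemma pairwise_disjoint_stepBox (hn : 0 < n) (V : Type*) :
    Pairwise fun φ ψ : V → Fin n => Disjoint (stepBox n φ) (stepBox n ψ) := by
  intro φ ψ hφψ
  obtain ⟨v, hv⟩ := Function.ne_iff.1 hφψ
  refine disjoint_left.2 fun x hφ hψ => hv (Fin.ext ?_)
  rw [← ((mem_cell_iff hn).1 (hφ v (mem_univ v))).2, ((mem_cell_iff hn).1 (hψ v (mem_univ v))).2]

lemma measurableSet_stepBox {V : Type*} [Countable V] (φ : V → Fin n) :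
    MeasurableSet (stepBox n φ) :=
  .univ_pi fun _ => measurableSet_Ico

lemma volume_stepBox {V : Type*} [Fintype V] (φ : V → Fin n) :
    volume (stepBox n φ) = ENNReal.ofReal ((n : ℝ)⁻¹) ^ Fintype.card V := by
  simp only [stepBox, cell, volume_pi_pi, Real.volume_Ico, add_div, add_sub_cancel_left,
    one_div, Finset.prod_const, Finset.card_univ]

theorem setIntegral_unitCube_of_eqOn_stepBox (hn : 0 < n) {V : Type*} [Fintype V]
    {G : (V → ℝ) → ℝ} (c : (V → Fin n) → ℝ) (hG : ∀ φ, EqOn G (fun _ => c φ) (stepBox n φ)) :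
    ∫ x in univ.pi (fun _ : V => Ico (0 : ℝ) 1), G x = (∑ φ, c φ) / (n : ℝ) ^ Fintype.card V := by
  have hvol : ∀ φ : V → Fin n, volume (stepBox n φ) ≠ ⊤ := fun φ => by
    rw [volume_stepBox]
    exact ENNReal.pow_ne_top ENNReal.ofReal_ne_top
  have hbox : ∀ φ, ∫ x in stepBox n φ, G x = c φ / (n : ℝ) ^ Fintype.card V := fun φ => by
    rw [setIntegral_congr_fun (measurableSet_stepBox φ) (hG φ), setIntegral_const,
      measureReal_def, volume_stepBox, ENNReal.toReal_pow, ENNReal.toReal_ofReal (by positivity),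
      smul_eq_mul, inv_pow, inv_mul_eq_div]
  rw [← iUnion_stepBox hn V, integral_iUnion_fintype measurableSet_stepBox
    (pairwise_disjoint_stepBox hn V)
    fun φ => (integrableOn_const (hvol φ)).congr_fun (hG φ).symm (measurableSet_stepBox φ)]
  simp only [hbox, Finset.sum_div]

end StepCells

lemma edgeProd_adj_indicator {V W : Type*} [Fintype V] (f : SimpleGraph V) (g : SimpleGraph W)
    (φ : V → W) :
    edgeProd f (fun u v => if g.Adj (φ u) (φ v) then 1 else 0) =
      if ∀ u v, f.Adj u v → g.Adj (φ u) (φ v) then 1 else 0 := by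
  have hfactor : ∀ e ∈ f.edgeFinset,
      Sym2.lift ⟨fun u v => ((if g.Adj (φ u) (φ v) then (1 : ℝ) else 0) +
        (if g.Adj (φ v) (φ u) then 1 else 0)) / 2, fun u v => by ring⟩ e =
      if Sym2.map φ e ∈ g.edgeSet then 1 else 0 := fun e _ => by
    induction e using Sym2.inductionOn with
    | hf u v => by_cases h : g.Adj (φ u) (φ v) <;> simp [h, g.adj_comm (φ v)]
  rw [edgeProd, Finset.prod_congr rfl hfactor, Finset.prod_boole]
  congr 1
  simp only [SimpleGraph.mem_edgeFinset, Sym2.forall, SimpleGraph.mem_edgeSet, Sym2.map_mk]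

lemma edgeProd_stepGraphon_of_mem_stepBox {V : Type*} [Fintype V] (f : SimpleGraph V) {n : ℕ}
    (hn : 0 < n) (g : SimpleGraph (Fin n)) {φ : V → Fin n} {x : V → ℝ} (hx : x ∈ stepBox n φ) :
    edgeProd f (fun u v => stepGraphon g (x u) (x v)) = if φ ∈ homFinset f g then 1 else 0 := by
  have hstep : (fun u v => stepGraphon g (x u) (x v)) =
      fun u v => if g.Adj (φ u) (φ v) then 1 else 0 := by
    funext u v
    exact stepFn_of_mem_cell hn _ (hx u (mem_univ u)) (hx v (mem_univ v))
  simp only [hstep, edgeProd_adj_indicator, homFinset, Finset.mem_filter, Finset.mem_univ,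
    true_and]

/-- The homomorphism density of `f` in the step graphon of `g` equals `hom(f,g)/n^k`, i.e.
`ρ(f, w_g) = ρ(f, g)`. -/
theorem density_stepGraphon_eq_homCount_div
    {V : Type*} [Fintype V] (f : SimpleGraph V)
    {n : ℕ} (hn : 1 ≤ n) (g : SimpleGraph (Fin n)) :
    density f (stepGraphon g) = (homCount f g : ℝ) / (n : ℝ) ^ (Fintype.card V) := by
  calc density f (stepGraphon g)
      = ∫ x in univ.pi (fun _ : V => Ico (0 : ℝ) 1),
          edgeProd f (fun u v => stepGraphon g (x u) (x v)) := by
        rw [density, volume_pi]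
        exact setIntegral_congr_set Measure.pi_Ico_ae_eq_pi_Icc.symm
    _ = (∑ φ, if φ ∈ homFinset f g then 1 else 0) / (n : ℝ) ^ Fintype.card V :=
        setIntegral_unitCube_of_eqOn_stepBox hn _
          fun _ _ hx => edgeProd_stepGraphon_of_mem_stepBox f hn g hx
    _ = (homCount f g : ℝ) / (n : ℝ) ^ Fintype.card V := by
        rw [Finset.sum_boole, Finset.filter_mem_eq_inter, Finset.univ_inter, homCount]

end EpsCLT
end
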